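/- Let S be a numerical semigroup, Σ = {(a,b) ∈ ℕ² : val_S(a−b) ≤ b} ⊆ ℕ². Then the Apery set Ap_{(1,1)}(Σ) = {σ ∈ Σ : σ − (1,1) ∉ Σ} equals {(s,0) : s ∈ S} ∪ {(0,s) : s ∈ S} ∪ {(val_S(−h), val_S(h)) : h ∈ ±H(S)}. -/
import Mathlib


/-- A numerical semigroup, viewed as a set of integers: it contains 0, is closed
under addition, consists of nonnegative integers, and has finite complement in ℕ. -/
def IsNumericalSemigroup (S : Set ℤ) : Prop :=
  0 ∈ S ∧ (∀ a ∈ S, ∀ b ∈ S, a + b ∈ S) ∧ (∀ s ∈ S, 0 ≤ s) ∧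
    {n : ℤ | 0 ≤ n ∧ n ∉ S}.Finite

/-- The valency of `z` with respect to `S`: the (finite) number of `s ∈ S`
with `z + s ∉ S`. -/
noncomputable def val (S : Set ℤ) (z : ℤ) : ℕ :=
  {s : ℤ | s ∈ S ∧ z + s ∉ S}.ncard

/-- The semigroup `Σ ⊆ ℕ²` of the associated graded ring of the ring of
differential operators on `ℂ[S]`: `(a,b) ∈ Σ` iff `val S (a - b) ≤ b`. -/
noncomputable def SigmaSet (S : Set ℤ) : Set (ℕ × ℕ) :=
  {p : ℕ × ℕ | val S ((p.1 : ℤ) - (p.2 : ℤ)) ≤ p.2}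

lemma NS.valset_finite (S : Set ℤ) (hS : IsNumericalSemigroup S) (z : ℤ) :
    {s : ℤ | s ∈ S ∧ z + s ∉ S}.Finite := by
  obtain ⟨h0, hadd, hpos, hfin⟩ := hS
  apply Set.Finite.subset ((Set.finite_Ico (0:ℤ) (-z)).union (hfin.image (fun x => x - z)))
  rintro s ⟨hsS, hzs⟩
  by_cases h : z + s < 0
  · exact Or.inl ⟨hpos s hsS, by omega⟩
  · exact Or.inr ⟨z + s, ⟨by omega, hzs⟩, by ring⟩

lemma NS.val_zero_iff (S : Set ℤ) (hS : IsNumericalSemigroup S) (z : ℤ) :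
    val S z = 0 ↔ z ∈ S := by
  constructor
  · intro h
    by_contra hz
    have hne : {s : ℤ | s ∈ S ∧ z + s ∉ S}.Nonempty := ⟨0, hS.1, by simpa using hz⟩
    have := (Set.ncard_pos (NS.valset_finite S hS z)).mpr hne
    rw [val] at h
    omega
  · intro h
    have he : {s : ℤ | s ∈ S ∧ z + s ∉ S} = ∅ := by
      ext s
      simp only [Set.mem_setOf_eq, Set.mem_empty_iff_false, iff_false, not_and, not_not]
      intro hs
      exact hS.2.1 z h s hs
    rw [val, he, Set.ncard_empty]

lemma NS.key (S : Set ℤ) (hS : IsNumericalSemigroup S) (n : ℤ) (hn : 0 ≤ n) :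
    val S (-n) = val S n + n.toNat := by
  have hAfin := NS.valset_finite S hS (-n)
  obtain ⟨h0, hadd, hpos, hfin⟩ := hS
  set C1 := {x : ℤ | (0 ≤ x ∧ x ∉ S) ∧ x - n ∈ S} with hC1def
  set C2 := {x : ℤ | (0 ≤ x ∧ x ∉ S) ∧ x + n ∈ S} with hC2def
  set C3 := {x : ℤ | (0 ≤ x ∧ x ∉ S) ∧ x < n} with hC3def
  set Bm := {x : ℤ | (0 ≤ x ∧ x ∉ S) ∧ (0 ≤ x - n ∧ x - n ∉ S)} with hBmdef
  set Bp := {x : ℤ | (0 ≤ x ∧ x ∉ S) ∧ (0 ≤ x + n ∧ x + n ∉ S)} with hBpdef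
  have fC1 : C1.Finite := hfin.subset (fun x hx => hx.1)
  have fC2 : C2.Finite := hfin.subset (fun x hx => hx.1)
  have fC3 : C3.Finite := hfin.subset (fun x hx => hx.1)
  have fBm : Bm.Finite := hfin.subset (fun x hx => hx.1)
  have fBp : Bp.Finite := hfin.subset (fun x hx => hx.1)
  -- partition of the gap set using `x - n`
  have hdisj1 : Disjoint C3 Bm := by
    rw [Set.disjoint_left]
    rintro x ⟨hx, hlt⟩ ⟨_, hge, _⟩
    omega
  have hdisj2 : Disjoint C1 (C3 ∪ Bm) := by
    rw [Set.disjoint_left]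
    rintro x ⟨hx, hs⟩ hmem
    rcases hmem with ⟨_, hlt⟩ | ⟨_, _, hns⟩
    · exact absurd (hpos _ hs) (by omega)
    · exact hns hs
  have hcover : {x : ℤ | 0 ≤ x ∧ x ∉ S} = C1 ∪ (C3 ∪ Bm) := by
    ext x
    simp only [Set.mem_union, hC1def, hC3def, hBmdef, Set.mem_setOf_eq]
    constructor
    · intro hx
      by_cases h1 : x < n
      · exact Or.inr (Or.inl ⟨hx, h1⟩)
      · by_cases h2 : x - n ∈ S
        · exact Or.inl ⟨hx, h2⟩
        · exact Or.inr (Or.inr ⟨hx, by omega, h2⟩)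
    · rintro (⟨hx, _⟩ | ⟨hx, _⟩ | ⟨hx, _⟩) <;> exact hx
  have e1 : {x : ℤ | 0 ≤ x ∧ x ∉ S}.ncard = C1.ncard + (C3.ncard + Bm.ncard) := by
    rw [hcover, Set.ncard_union_eq hdisj2 fC1 (fC3.union fBm),
      Set.ncard_union_eq hdisj1 fC3 fBm]
  -- partition of the gap set using `x + n`
  have hdisj3 : Disjoint C2 Bp := by
    rw [Set.disjoint_left]
    rintro x ⟨hx, hs⟩ ⟨_, _, hns⟩
    exact hns hs
  have hcover2 : {x : ℤ | 0 ≤ x ∧ x ∉ S} = C2 ∪ Bp := by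
    ext x
    simp only [Set.mem_union, hC2def, hBpdef, Set.mem_setOf_eq]
    constructor
    · intro hx
      by_cases h2 : x + n ∈ S
      · exact Or.inl ⟨hx, h2⟩
      · exact Or.inr ⟨hx, by omega, h2⟩
    · rintro (⟨hx, _⟩ | ⟨hx, _⟩) <;> exact hx
  have e2 : {x : ℤ | 0 ≤ x ∧ x ∉ S}.ncard = C2.ncard + Bp.ncard := by
    rw [hcover2, Set.ncard_union_eq hdisj3 fC2 fBp]
  -- bijection between Bp and Bm
  have himg : (fun x => x + n) '' Bp = Bm := by
    ext y
    simp only [Set.mem_image, hBpdef, hBmdef, Set.mem_setOf_eq]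
    constructor
    · rintro ⟨x, ⟨hx, hxn⟩, rfl⟩
      refine ⟨hxn, ?_⟩
      have hxy : x + n - n = x := by ring
      rw [hxy]
      exact hx
    · rintro ⟨hy, hyn⟩
      refine ⟨y - n, ⟨hyn, ?_⟩, by ring⟩
      have hxy : y - n + n = y := by ring
      rw [hxy]
      exact hy
  have e3 : Bp.ncard = Bm.ncard := by
    rw [← himg, Set.ncard_image_of_injective _ (add_left_injective n)]
  -- val S n = #C1
  have himg4 : (fun s => n + s) '' {s : ℤ | s ∈ S ∧ n + s ∉ S} = C1 := by
    ext y
    simp only [Set.mem_image, hC1def, Set.mem_setOf_eq]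
    constructor
    · rintro ⟨s, ⟨hs, hns⟩, rfl⟩
      refine ⟨⟨by have := hpos s hs; omega, hns⟩, ?_⟩
      have hxy : n + s - n = s := by ring
      rw [hxy]
      exact hs
    · rintro ⟨⟨hy0, hyS⟩, hyn⟩
      refine ⟨y - n, ⟨hyn, ?_⟩, by ring⟩
      have hxy : n + (y - n) = y := by ring
      rw [hxy]
      exact hyS
  have e4 : val S n = C1.ncard := by
    rw [val, ← himg4, Set.ncard_image_of_injective _ (add_right_injective n)]
  -- the set computing val S (-n), split into two pieces
  set P1 := {s : ℤ | s ∈ S ∧ s < n} with hP1def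
  set P2 := {s : ℤ | s ∈ S ∧ n ≤ s ∧ -n + s ∉ S} with hP2def
  have hcover5 : {s : ℤ | s ∈ S ∧ -n + s ∉ S} = P1 ∪ P2 := by
    ext s
    simp only [Set.mem_union, hP1def, hP2def, Set.mem_setOf_eq]
    constructor
    · rintro ⟨hs, hns⟩
      by_cases h1 : s < n
      · exact Or.inl ⟨hs, h1⟩
      · exact Or.inr ⟨hs, by omega, hns⟩
    · rintro (⟨hs, hlt⟩ | ⟨hs, hle, hns⟩)
      · refine ⟨hs, fun hc => ?_⟩
        have := hpos _ hc
        omega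
      · exact ⟨hs, hns⟩
  have fP1 : P1.Finite := by
    apply (Set.finite_Ico (0:ℤ) n).subset
    rintro s ⟨hs, hlt⟩
    exact ⟨hpos _ hs, hlt⟩
  have fP2 : P2.Finite := by
    apply hAfin.subset
    rw [hcover5]
    exact Set.subset_union_right
  have hdisj5 : Disjoint P1 P2 := by
    rw [Set.disjoint_left]
    rintro s ⟨_, hlt⟩ ⟨_, hle, _⟩
    omega
  have e5 : val S (-n) = P1.ncard + P2.ncard := by
    rw [val, hcover5, Set.ncard_union_eq hdisj5 fP1 fP2]
  -- #P2 = #C2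
  have himg6 : (fun s => s - n) '' P2 = C2 := by
    ext y
    simp only [Set.mem_image, hP2def, hC2def, Set.mem_setOf_eq]
    constructor
    · rintro ⟨s, ⟨hs, hle, hns⟩, rfl⟩
      refine ⟨⟨by omega, ?_⟩, ?_⟩
      · have hxy : s - n = -n + s := by ring
        rw [hxy]
        exact hns
      · have hxy : s - n + n = s := by ring
        rw [hxy]
        exact hs
    · rintro ⟨⟨hy0, hyn⟩, hyS⟩
      refine ⟨y + n, ⟨hyS, by omega, ?_⟩, by ring⟩
      have hxy : -n + (y + n) = y := by ring
      rw [hxy]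
      exact hyn
  have e6 : P2.ncard = C2.ncard := by
    rw [← himg6, Set.ncard_image_of_injective _ (sub_left_injective)]
  -- #P1 + #C3 = n.toNat
  have hcover7 : Set.Ico (0:ℤ) n = P1 ∪ C3 := by
    ext x
    simp only [Set.mem_union, hP1def, hC3def, Set.mem_setOf_eq, Set.mem_Ico]
    constructor
    · rintro ⟨h1, h2⟩
      by_cases hx : x ∈ S
      · exact Or.inl ⟨hx, h2⟩
      · exact Or.inr ⟨⟨h1, hx⟩, h2⟩
    · rintro (⟨hs, hlt⟩ | ⟨⟨h1, _⟩, hlt⟩)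
      · exact ⟨hpos _ hs, hlt⟩
      · exact ⟨h1, hlt⟩
  have hdisj7 : Disjoint P1 C3 := by
    rw [Set.disjoint_left]
    rintro x ⟨hs, _⟩ ⟨⟨_, hns⟩, _⟩
    exact hns hs
  have e7 : P1.ncard + C3.ncard = n.toNat := by
    have h1 : (Set.Ico (0:ℤ) n).ncard = n.toNat := by
      rw [← Finset.coe_Ico, Set.ncard_coe_finset, Int.card_Ico]
      simp
    rw [← h1, hcover7, Set.ncard_union_eq hdisj7 fP1 fC3]
  omega

lemma NS.val_neg_cast (S : Set ℤ) (hS : IsNumericalSemigroup S) (z : ℤ) :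
    (val S (-z) : ℤ) = (val S z : ℤ) + z := by
  rcases le_or_gt 0 z with h | h
  · have := NS.key S hS z h
    omega
  · have := NS.key S hS (-z) (by omega)
    rw [neg_neg] at this
    omega

theorem apery_SigmaSet (S : Set ℤ) (hS : IsNumericalSemigroup S) :
    {p : ℕ × ℕ | p ∈ SigmaSet S ∧ ∀ q ∈ SigmaSet S, q + (1, 1) ≠ p} =
      {p : ℕ × ℕ | ((p.1 : ℤ) ∈ S ∧ p.2 = 0) ∨ (p.1 = 0 ∧ (p.2 : ℤ) ∈ S) ∨
        (∃ h : ℤ, h ∉ S ∧ -h ∉ S ∧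
          p.1 = val S (-h) ∧ p.2 = val S h)} := by
  ext p
  obtain ⟨a, b⟩ := p
  simp only [Set.mem_setOf_eq, SigmaSet]
  constructor
  · rintro ⟨hmem, hap⟩
    rcases Nat.eq_zero_or_pos b with hb | hb
    · subst hb
      left
      refine ⟨?_, rfl⟩
      have h0 : val S ((a : ℤ)) = 0 := by
        have h1 : val S ((a : ℤ) - ((0 : ℕ) : ℤ)) ≤ (0 : ℕ) := hmem
        simpa using h1
      exact (NS.val_zero_iff S hS _).mp h0
    · rcases Nat.eq_zero_or_pos a with ha | ha
      · subst ha
        right; left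
        refine ⟨rfl, ?_⟩
        have h1 : (val S (-(b : ℤ)) : ℤ) = (val S (b : ℤ) : ℤ) + b := NS.val_neg_cast S hS b
        have h2 : val S (((0 : ℕ) : ℤ) - (b : ℤ)) ≤ b := hmem
        have h2' : val S (-(b : ℤ)) ≤ b := by simpa using h2
        have h3 : val S ((b : ℤ)) = 0 := by omega
        exact (NS.val_zero_iff S hS _).mp h3
      · right; right
        have hq := hap (a - 1, b - 1)
        have hqe : ((a - 1 : ℕ), (b - 1 : ℕ)) + ((1 : ℕ), (1 : ℕ)) = (a, b) := by
          simp only [Prod.mk_add_mk, Prod.mk.injEq]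
          omega
        have hnot : ¬ (val S (((a - 1 : ℕ) : ℤ) - ((b - 1 : ℕ) : ℤ)) ≤ (b - 1 : ℕ)) :=
          fun hc => hq hc hqe
        have hcast : ((a - 1 : ℕ) : ℤ) - ((b - 1 : ℕ) : ℤ) = (a : ℤ) - b := by omega
        rw [hcast] at hnot
        have heq : val S ((a : ℤ) - b) = b := by omega
        have hhd : (val S (-((a : ℤ) - b)) : ℤ) = (val S ((a : ℤ) - b) : ℤ) + ((a : ℤ) - b) :=
          NS.val_neg_cast S hS _
        have heq2 : val S (-((a : ℤ) - b)) = a := by omega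
        refine ⟨(a : ℤ) - b, ?_, ?_, heq2.symm, heq.symm⟩
        · intro hc
          have := (NS.val_zero_iff S hS _).mpr hc
          omega
        · intro hc
          have := (NS.val_zero_iff S hS _).mpr hc
          omega
  · rintro (⟨haS, hb⟩ | ⟨ha, hbS⟩ | ⟨h, hh, hnh, hpa, hpb⟩)
    · subst hb
      constructor
      · show val S ((a : ℤ) - ((0 : ℕ) : ℤ)) ≤ (0 : ℕ)
        have h0 : val S ((a : ℤ)) = 0 := (NS.val_zero_iff S hS _).mpr haS
        simpa using h0.le
      · rintro ⟨q1, q2⟩ hq hqe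
        simp only [Prod.mk_add_mk, Prod.mk.injEq] at hqe
        omega
    · subst ha
      constructor
      · show val S (((0 : ℕ) : ℤ) - (b : ℤ)) ≤ b
        have h0 : val S ((b : ℤ)) = 0 := (NS.val_zero_iff S hS _).mpr hbS
        have h1 : (val S (-(b : ℤ)) : ℤ) = (val S (b : ℤ) : ℤ) + b := NS.val_neg_cast S hS b
        have h2 : ((0 : ℕ) : ℤ) - (b : ℤ) = -(b : ℤ) := by omega
        rw [h2]
        omega
      · rintro ⟨q1, q2⟩ hq hqe
        simp only [Prod.mk_add_mk, Prod.mk.injEq] at hqe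
        omega
    · have hkey : (val S (-h) : ℤ) = (val S h : ℤ) + h := NS.val_neg_cast S hS h
      have hab : (a : ℤ) - b = h := by omega
      constructor
      · show val S ((a : ℤ) - (b : ℤ)) ≤ b
        rw [hab]
        omega
      · rintro ⟨q1, q2⟩ hq hqe
        simp only [Prod.mk_add_mk, Prod.mk.injEq] at hqe
        have hq' : val S ((q1 : ℤ) - (q2 : ℤ)) ≤ q2 := hq
        have hq1 : (q1 : ℤ) - (q2 : ℤ) = h := by omega
        rw [hq1] at hq'
        omega
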